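/- The Best-Relaxed-Blocking-Pair algorithm terminates after at most 2m² iterations, where m is the number of edges, and its output is a stable matching. -/

import Mathlib

open Finset

variable {V : Type*} [Fintype V] [DecidableEq V]

/-- `partnerReward r M x` is the reward share that node `x` obtains in matching `M`:
`r x y` if `x` is matched to `y`, and `0` if `x` is unmatched. -/
def partnerReward (r : V → V → ℝ) (M : V → Option V) (x : V) : ℝ :=
  match M x with
  | some y => r x y
  | none => 0

/-- `M : V → Option V` encodes a matching in graph `G`. -/
def IsMatching (G : SimpleGraph V) (M : V → Option V) : Prop :=
  (∀ u v, M u = some v → G.Adj u v) ∧ (∀ u v, M u = some v → M v = some u)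

/-- The matching obtained when `u` and `v` abandon their current partners (if any)
and match to each other. -/
def rematch (M : V → Option V) (u v : V) : V → Option V :=
  fun x => if x = u then some v else if x = v then some u
    else if M x = some u ∨ M x = some v then none else M x

/-- The perceived (friendship) utility of node `v`:
`U_v = R_v + ∑_d α_d ∑_{u ∈ N_d(v)} R_u`, where the sum over nodes at distance `d`
is encoded via `α (G.dist v u)` (with `α 0 = 0` for unreachable/irrelevant pairs). -/
noncomputable def util (G : SimpleGraph V) (r : V → V → ℝ) (α : ℕ → ℝ)
    (M : V → Option V) (v : V) : ℝ :=
  partnerReward r M v +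
    ∑ u ∈ univ.filter (fun u => u ≠ v), α (G.dist v u) * partnerReward r M u

/-- `(u,v)` is a blocking pair for `M`: they are adjacent, not matched to each other,
and both strictly increase their perceived utility by matching to each other. -/
def IsBlockingPair (G : SimpleGraph V) (r : V → V → ℝ) (α : ℕ → ℝ)
    (M : V → Option V) (u v : V) : Prop :=
  G.Adj u v ∧ M u ≠ some v ∧
    util G r α M u < util G r α (rematch M u v) u ∧
    util G r α M v < util G r α (rematch M u v) v

/-- A stable matching: a matching admitting no blocking pair. -/
def StableMatching (G : SimpleGraph V) (r : V → V → ℝ) (α : ℕ → ℝ)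
    (M : V → Option V) : Prop :=
  IsMatching G M ∧ ∀ u v, ¬ IsBlockingPair G r α M u v

/-- Total weight of a matching under equal sharing (each edge counted once). -/
noncomputable def matchWeight (r : V → V → ℝ) (M : V → Option V) : ℝ :=
  (∑ v, partnerReward r M v) / 2

/-- Total reward of a matching under general reward sharing (sum of all shares). -/
noncomputable def totalWeight (r : V → V → ℝ) (M : V → Option V) : ℝ :=
  ∑ v, partnerReward r M v

/-- Admissible friendship parameters: `1 ≥ α₁ ≥ α₂ ≥ … ≥ 0` (and `α 0 = 0` as a
convention so that only distances `d ≥ 1` contribute). -/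
def FriendshipVec (α : ℕ → ℝ) : Prop :=
  α 0 = 0 ∧ α 1 ≤ 1 ∧ (∀ d, 0 ≤ α d) ∧ ∀ d e, 1 ≤ d → d ≤ e → α e ≤ α d

/-- A relaxed blocking pair for (equal-sharing) rewards r with friendship
parameters α₁ ≥ α₂: either an improving swivel (one of the nodes unmatched),
or a relaxed biswivel satisfying the two relaxed inequalities. -/
def RelaxedBP (G : SimpleGraph V) (r : V → V → ℝ) (α1 α2 : ℝ)
    (M : V → Option V) (u v : V) : Prop :=
  G.Adj u v ∧ M u ≠ some v ∧
    (((M u = none ∨ M v = none) ∧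
        partnerReward r M u < r u v ∧ partnerReward r M v < r u v) ∨
      (∃ w z, M u = some w ∧ M v = some z ∧
        (1 + α1) * r u w + (α1 + α2) * r v z < (1 + α1) * r u v ∧
        (1 + α1) * r v z + (α1 + α2) * r u w < (1 + α1) * r u v))

set_option linter.unusedSectionVars false
set_option maxHeartbeats 1000000

section Basic

variable {G : SimpleGraph V} {M : V → Option V} {u v x : V}

lemma rematch_fst : rematch M u v u = some v := by simp [rematch]

lemma rematch_snd (h : u ≠ v) : rematch M u v v = some u := by
  simp [rematch, h.symm]

lemma rematch_none (hx : x ≠ u) (hx' : x ≠ v) (h : M x = some u ∨ M x = some v) :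
    rematch M u v x = none := by
  simp [rematch, hx, hx', h]

lemma rematch_other (hx : x ≠ u) (hx' : x ≠ v) (h1 : M x ≠ some u) (h2 : M x ≠ some v) :
    rematch M u v x = M x := by
  simp [rematch, hx, hx', h1, h2]

lemma IsMatching.ne_of_partner (hM : IsMatching G M) (h : M u = some v) : u ≠ v := by
  intro he; subst he; exact G.loopless.irrefl _ (hM.1 _ _ h)

lemma IsMatching.rematch (hM : IsMatching G M) (huv : G.Adj u v) :
    IsMatching G (rematch M u v) := by
  have hne : u ≠ v := huv.ne
  constructor
  · intro a b hab
    by_cases ha : a = u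
    · subst ha; rw [rematch_fst] at hab; cases hab; exact huv
    by_cases ha' : a = v
    · subst ha'; rw [rematch_snd hne] at hab; cases hab; exact huv.symm
    by_cases h2 : M a = some u ∨ M a = some v
    · rw [rematch_none ha ha' h2] at hab; cases hab
    · push_neg at h2
      rw [rematch_other ha ha' h2.1 h2.2] at hab
      exact hM.1 a b hab
  · intro a b hab
    by_cases ha : a = u
    · subst ha; rw [rematch_fst] at hab; cases hab; exact rematch_snd hne
    by_cases ha' : a = v
    · subst ha'; rw [rematch_snd hne] at hab; cases hab; exact rematch_fst
    by_cases h2 : M a = some u ∨ M a = some v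
    · rw [rematch_none ha ha' h2] at hab; cases hab
    · push_neg at h2
      rw [rematch_other ha ha' h2.1 h2.2] at hab
      have hb : b ≠ u := by rintro rfl; exact h2.1 hab
      have hb' : b ≠ v := by rintro rfl; exact h2.2 hab
      have hba := hM.2 a b hab
      have hbu : M b ≠ some u := by
        intro h3; rw [hba] at h3; cases h3; exact ha rfl
      have hbv : M b ≠ some v := by
        intro h3; rw [hba] at h3; cases h3; exact ha' rfl
      rw [rematch_other hb hb' hbu hbv]; exact hba

lemma partnerReward_some (h : M x = some v) (r : V → V → ℝ) :
    partnerReward r M x = r x v := by simp [partnerReward, h]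

lemma partnerReward_none (h : M x = none) (r : V → V → ℝ) :
    partnerReward r M x = 0 := by simp [partnerReward, h]

end Basic


section Rank

open scoped Classical

variable (G : SimpleGraph V) (r : V → V → ℝ)

noncomputable def rS (hr : ∀ a b, r a b = r b a) : Sym2 V → ℝ :=
  Sym2.lift ⟨r, fun a b => hr a b⟩

noncomputable def enc : Sym2 V → ℕ := fun e => (Fintype.equivFin (Sym2 V) e : ℕ)

def kless (hr : ∀ a b, r a b = r b a) (e f : Sym2 V) : Prop :=
  rS r hr e < rS r hr f ∨ (rS r hr e = rS r hr f ∧ enc e < enc f)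

noncomputable def rho (hr : ∀ a b, r a b = r b a) (e : Sym2 V) : ℕ :=
  (G.edgeFinset.filter (fun f => kless r hr f e)).card + 1

variable {G r}
variable {hr : ∀ a b, r a b = r b a}

@[simp] lemma rS_mk (a b : V) : rS r hr s(a, b) = r a b := rfl

lemma kless_trans {e f g : Sym2 V} (h1 : kless r hr e f) (h2 : kless r hr f g) :
    kless r hr e g := by
  rcases h1 with h1 | ⟨h1, h1'⟩ <;> rcases h2 with h2 | ⟨h2, h2'⟩
  · exact Or.inl (h1.trans h2)
  · exact Or.inl (h2 ▸ h1)
  · exact Or.inl (h1 ▸ h2)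
  · exact Or.inr ⟨h1.trans h2, h1'.trans h2'⟩

lemma kless_irrefl (e : Sym2 V) : ¬ kless r hr e e := by
  rintro (h | ⟨h, h'⟩)
  · exact lt_irrefl _ h
  · exact lt_irrefl _ h'

lemma kless_total {e f : Sym2 V} (hef : e ≠ f) : kless r hr e f ∨ kless r hr f e := by
  rcases lt_trichotomy (rS r hr e) (rS r hr f) with h | h | h
  · exact Or.inl (Or.inl h)
  · have : enc e ≠ enc f := fun hc => hef ((Fintype.equivFin (Sym2 V)).injective (Fin.val_injective hc))
    rcases lt_or_gt_of_ne this with h' | h'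
    · exact Or.inl (Or.inr ⟨h, h'⟩)
    · exact Or.inr (Or.inr ⟨h.symm, h'⟩)
  · exact Or.inr (Or.inl h)

lemma rho_lt_rho {e f : Sym2 V} (he : e ∈ G.edgeFinset) (h : kless r hr e f) :
    rho G r hr e < rho G r hr f := by
  have hsub : insert e (G.edgeFinset.filter (fun g => kless r hr g e)) ⊆
      G.edgeFinset.filter (fun g => kless r hr g f) := by
    intro g hg
    rcases Finset.mem_insert.mp hg with rfl | hg
    · exact Finset.mem_filter.mpr ⟨he, h⟩
    · rcases Finset.mem_filter.mp hg with ⟨hg1, hg2⟩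
      exact Finset.mem_filter.mpr ⟨hg1, kless_trans hg2 h⟩
  have hni : e ∉ G.edgeFinset.filter (fun g => kless r hr g e) := by
    intro hc; exact kless_irrefl e (Finset.mem_filter.mp hc).2
  have := Finset.card_le_card hsub
  rw [Finset.card_insert_of_notMem hni] at this
  simp only [rho]; omega

lemma rho_lt_of_r_lt {e f : Sym2 V} (he : e ∈ G.edgeFinset)
    (h : rS r hr e < rS r hr f) : rho G r hr e < rho G r hr f :=
  rho_lt_rho he (Or.inl h)

lemma rho_ne {e f : Sym2 V} (he : e ∈ G.edgeFinset) (hf : f ∈ G.edgeFinset)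
    (hef : e ≠ f) : rho G r hr e ≠ rho G r hr f := by
  rcases kless_total (hr := hr) hef with h | h
  · exact Nat.ne_of_lt (rho_lt_rho he h)
  · exact Nat.ne_of_lt' (rho_lt_rho hf h)

lemma rho_le {e : Sym2 V} (he : e ∈ G.edgeFinset) :
    rho G r hr e ≤ G.edgeFinset.card := by
  have hsub : G.edgeFinset.filter (fun g => kless r hr g e) ⊆ G.edgeFinset.erase e := by
    intro g hg
    rcases Finset.mem_filter.mp hg with ⟨h1, h2⟩
    refine Finset.mem_erase.mpr ⟨?_, h1⟩
    rintro rfl; exact kless_irrefl _ h2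
  have := Finset.card_le_card hsub
  rw [Finset.card_erase_of_mem he] at this
  have hpos : 1 ≤ G.edgeFinset.card := Finset.card_pos.mpr ⟨e, he⟩
  simp only [rho]; omega

lemma one_le_rho (e : Sym2 V) : 1 ≤ rho G r hr e := Nat.le_add_left 1 _

end Rank


section Phi

open scoped Classical

variable {G : SimpleGraph V} {r : V → V → ℝ} {hr : ∀ a b, r a b = r b a}
variable {M : V → Option V} {u v w z : V}

def me (M : V → Option V) : Sym2 V → Prop :=
  Sym2.lift ⟨fun a b => M a = some b ∧ M b = some a, fun a b => propext and_comm⟩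

@[simp] lemma me_mk {a b : V} : me M s(a, b) ↔ (M a = some b ∧ M b = some a) := Iff.rfl

noncomputable def Phi (G : SimpleGraph V) (r : V → V → ℝ) (hr : ∀ a b, r a b = r b a)
    (M : V → Option V) : ℕ :=
  ∑ e ∈ G.edgeFinset.filter (me M), rho G r hr e

lemma sym2_ne_iff {a b c d : V} :
    s(a, b) ≠ s(c, d) ↔ ¬(a = c ∧ b = d) ∧ ¬(a = d ∧ b = c) := by
  rw [ne_eq, Sym2.eq_iff]; tauto

lemma me_rematch_iff (hM : IsMatching G M) (hne : u ≠ v) (a b : V)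
    (h1 : s(a, b) ≠ s(u, v))
    (h2 : ∀ w, M u = some w → s(a, b) ≠ s(u, w))
    (h3 : ∀ z, M v = some z → s(a, b) ≠ s(v, z)) :
    (me (rematch M u v) s(a, b) ↔ me M s(a, b)) := by
  by_cases hau : a = u
  · subst hau
    have hbv : b ≠ v := by
      intro hbv; subst hbv; exact h1 rfl
    apply iff_of_false
    · rintro ⟨hc, -⟩
      rw [rematch_fst] at hc; exact hbv (Option.some_injective _ hc).symm
    · rintro ⟨hc, -⟩
      exact h2 b hc rfl
  by_cases hav : a = v
  · subst hav
    have hbu : b ≠ u := by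
      intro hbu; subst hbu
      exact h1 (Sym2.eq_swap)
    apply iff_of_false
    · rintro ⟨hc, -⟩
      rw [rematch_snd hne] at hc; exact hbu (Option.some_injective _ hc).symm
    · rintro ⟨hc, -⟩
      exact h3 b hc rfl
  by_cases hbu : b = u
  · subst hbu
    apply iff_of_false
    · rintro ⟨-, hc⟩
      rw [rematch_fst] at hc; exact hav (Option.some_injective _ hc).symm
    · rintro ⟨-, hc⟩
      exact h2 a hc Sym2.eq_swap
  by_cases hbv : b = v
  · subst hbv
    apply iff_of_false
    · rintro ⟨-, hc⟩
      rw [rematch_snd hne] at hc; exact hau (Option.some_injective _ hc).symm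
    · rintro ⟨-, hc⟩
      exact h3 a hc Sym2.eq_swap
  -- a, b ∉ {u, v}
  by_cases hMa : M a = some u ∨ M a = some v
  · have hLa : rematch M u v a = none := rematch_none hau hav hMa
    apply iff_of_false
    · rintro ⟨hc, -⟩; rw [hLa] at hc; cases hc
    · rintro ⟨hc, -⟩
      rcases hMa with h | h <;> rw [hc] at h <;> cases h
      · exact hbu rfl
      · exact hbv rfl
  by_cases hMb : M b = some u ∨ M b = some v
  · have hLb : rematch M u v b = none := rematch_none hbu hbv hMb
    apply iff_of_false
    · rintro ⟨-, hc⟩; rw [hLb] at hc; cases hc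
    · rintro ⟨-, hc⟩
      rcases hMb with h | h <;> rw [hc] at h <;> cases h
      · exact hau rfl
      · exact hav rfl
  push_neg at hMa hMb
  rw [me_mk, me_mk, rematch_other hau hav hMa.1 hMa.2, rematch_other hbu hbv hMb.1 hMb.2]

lemma phi_as_sum (N : V → Option V) :
    Phi G r hr N = ∑ e ∈ G.edgeFinset, if me N e then rho G r hr e else 0 := by
  rw [Phi, Finset.sum_filter]

lemma edge_mem (h : G.Adj u v) : s(u, v) ∈ G.edgeFinset := by
  rw [SimpleGraph.mem_edgeFinset, SimpleGraph.mem_edgeSet]; exact h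

/-- biswivel change -/
lemma Phi_rematch_wz (hM : IsMatching G M) (huv : G.Adj u v) (hnuv : M u ≠ some v)
    (hMu : M u = some w) (hMv : M v = some z) :
    Phi G r hr (rematch M u v) + rho G r hr s(u, w) + rho G r hr s(v, z)
      = Phi G r hr M + rho G r hr s(u, v) := by
  have hne : u ≠ v := huv.ne
  have huw : u ≠ w := hM.ne_of_partner hMu
  have hvz : v ≠ z := hM.ne_of_partner hMv
  have hwv : w ≠ v := by rintro rfl; exact hnuv hMu
  have hzu : z ≠ u := by
    rintro rfl; exact hnuv (hM.2 v _ hMv)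
  have hwu : M w = some u := hM.2 u w hMu
  have hzv : M z = some v := hM.2 v z hMv
  have e1 : s(u, v) ∈ G.edgeFinset := edge_mem huv
  have e2 : s(u, w) ∈ G.edgeFinset := edge_mem (hM.1 u w hMu)
  have e3 : s(v, z) ∈ G.edgeFinset := edge_mem (hM.1 v z hMv)
  have d12 : s(u, v) ≠ s(u, w) := by
    rw [sym2_ne_iff]; exact ⟨fun h => hwv h.2.symm, fun h => huw h.1⟩
  have d13 : s(u, v) ≠ s(v, z) := by
    rw [sym2_ne_iff]; exact ⟨fun h => hne h.1, fun h => hzu h.1.symm⟩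
  have d23 : s(u, w) ≠ s(v, z) := by
    rw [sym2_ne_iff]; exact ⟨fun h => hne h.1, fun h => hzu h.1.symm⟩
  set T : Finset (Sym2 V) := {s(u, v), s(u, w), s(v, z)} with hT
  have hTsub : T ⊆ G.edgeFinset := by
    intro e he
    simp only [hT, Finset.mem_insert, Finset.mem_singleton] at he
    rcases he with rfl | rfl | rfl <;> assumption
  have hsplit : ∀ N : V → Option V,
      Phi G r hr N = (∑ e ∈ G.edgeFinset \ T, if me N e then rho G r hr e else 0)
        + ∑ e ∈ T, (if me N e then rho G r hr e else 0) := by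
    intro N; rw [phi_as_sum, ← Finset.sum_sdiff hTsub]
  have hrest : (∑ e ∈ G.edgeFinset \ T, if me (rematch M u v) e then rho G r hr e else 0)
      = ∑ e ∈ G.edgeFinset \ T, if me M e then rho G r hr e else 0 := by
    refine Finset.sum_congr rfl ?_
    intro e he
    rcases Finset.mem_sdiff.mp he with ⟨-, heT⟩
    simp only [hT, Finset.mem_insert, Finset.mem_singleton, not_or] at heT
    induction e using Sym2.ind with
    | _ a b =>
      rw [me_rematch_iff hM hne a b heT.1
        (fun w' hw' => by rw [hMu] at hw'; cases hw'; exact heT.2.1)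
        (fun z' hz' => by rw [hMv] at hz'; cases hz'; exact heT.2.2)]
  have hsumM : ∑ e ∈ T, (if me M e then rho G r hr e else 0)
      = rho G r hr s(u, w) + rho G r hr s(v, z) := by
    rw [hT, Finset.sum_insert (by simp [d12, d13]), Finset.sum_insert (by simp [d23]),
      Finset.sum_singleton]
    have m1 : ¬ me M s(u, v) := by
      rintro ⟨hc, -⟩; rw [hMu] at hc; cases hc; exact hwv rfl
    have m2 : me M s(u, w) := ⟨hMu, hwu⟩
    have m3 : me M s(v, z) := ⟨hMv, hzv⟩
    simp [m1, m2, m3]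
  have hsumM' : ∑ e ∈ T, (if me (rematch M u v) e then rho G r hr e else 0)
      = rho G r hr s(u, v) := by
    rw [hT, Finset.sum_insert (by simp [d12, d13]), Finset.sum_insert (by simp [d23]),
      Finset.sum_singleton]
    have m1 : me (rematch M u v) s(u, v) := ⟨rematch_fst, rematch_snd hne⟩
    have m2 : ¬ me (rematch M u v) s(u, w) := by
      rintro ⟨hc, -⟩; rw [rematch_fst] at hc; cases hc; exact hwv rfl
    have m3 : ¬ me (rematch M u v) s(v, z) := by
      rintro ⟨hc, -⟩; rw [rematch_snd hne] at hc; cases hc; exact hzu rfl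
    simp [m1, m2, m3]
  rw [hsplit M, hsplit (rematch M u v), hrest, hsumM, hsumM']
  omega

end Phi


section Phi2

open scoped Classical

variable {G : SimpleGraph V} {r : V → V → ℝ} {hr : ∀ a b, r a b = r b a}
variable {M : V → Option V} {u v w z : V}

/-- swivel change, u unmatched, v matched -/
lemma Phi_rematch_nz (hM : IsMatching G M) (huv : G.Adj u v)
    (hMu : M u = none) (hMv : M v = some z) :
    Phi G r hr (rematch M u v) + rho G r hr s(v, z)
      = Phi G r hr M + rho G r hr s(u, v) := by
  have hne : u ≠ v := huv.ne
  have hvz : v ≠ z := hM.ne_of_partner hMv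
  have hzu : z ≠ u := by
    rintro rfl; rw [hM.2 v _ hMv] at hMu; cases hMu
  have hzv : M z = some v := hM.2 v z hMv
  have e1 : s(u, v) ∈ G.edgeFinset := edge_mem huv
  have e3 : s(v, z) ∈ G.edgeFinset := edge_mem (hM.1 v z hMv)
  have d13 : s(u, v) ≠ s(v, z) := by
    rw [sym2_ne_iff]; exact ⟨fun h => hne h.1, fun h => hzu h.1.symm⟩
  set T : Finset (Sym2 V) := {s(u, v), s(v, z)} with hT
  have hTsub : T ⊆ G.edgeFinset := by
    intro e he
    simp only [hT, Finset.mem_insert, Finset.mem_singleton] at he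
    rcases he with rfl | rfl <;> assumption
  have hsplit : ∀ N : V → Option V,
      Phi G r hr N = (∑ e ∈ G.edgeFinset \ T, if me N e then rho G r hr e else 0)
        + ∑ e ∈ T, (if me N e then rho G r hr e else 0) := by
    intro N; rw [phi_as_sum, ← Finset.sum_sdiff hTsub]
  have hrest : (∑ e ∈ G.edgeFinset \ T, if me (rematch M u v) e then rho G r hr e else 0)
      = ∑ e ∈ G.edgeFinset \ T, if me M e then rho G r hr e else 0 := by
    refine Finset.sum_congr rfl ?_
    intro e he
    rcases Finset.mem_sdiff.mp he with ⟨-, heT⟩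
    simp only [hT, Finset.mem_insert, Finset.mem_singleton, not_or] at heT
    induction e using Sym2.ind with
    | _ a b =>
      rw [me_rematch_iff hM hne a b heT.1
        (fun w' hw' => by rw [hMu] at hw'; cases hw')
        (fun z' hz' => by rw [hMv] at hz'; cases hz'; exact heT.2)]
  have hsumM : ∑ e ∈ T, (if me M e then rho G r hr e else 0) = rho G r hr s(v, z) := by
    rw [hT, Finset.sum_insert (by simp [d13]), Finset.sum_singleton]
    have m1 : ¬ me M s(u, v) := by
      rintro ⟨hc, -⟩; rw [hMu] at hc; cases hc
    have m3 : me M s(v, z) := ⟨hMv, hzv⟩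
    simp [m1, m3]
  have hsumM' : ∑ e ∈ T, (if me (rematch M u v) e then rho G r hr e else 0)
      = rho G r hr s(u, v) := by
    rw [hT, Finset.sum_insert (by simp [d13]), Finset.sum_singleton]
    have m1 : me (rematch M u v) s(u, v) := ⟨rematch_fst, rematch_snd hne⟩
    have m3 : ¬ me (rematch M u v) s(v, z) := by
      rintro ⟨hc, -⟩; rw [rematch_snd hne] at hc; cases hc; exact hzu rfl
    simp [m1, m3]
  rw [hsplit M, hsplit (rematch M u v), hrest, hsumM, hsumM']
  omega

/-- swivel change, u matched, v unmatched -/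
lemma Phi_rematch_wn (hM : IsMatching G M) (huv : G.Adj u v)
    (hMu : M u = some w) (hMv : M v = none) :
    Phi G r hr (rematch M u v) + rho G r hr s(u, w)
      = Phi G r hr M + rho G r hr s(u, v) := by
  have hne : u ≠ v := huv.ne
  have huw : u ≠ w := hM.ne_of_partner hMu
  have hwv : w ≠ v := by
    rintro rfl; rw [hM.2 u _ hMu] at hMv; cases hMv
  have hwu : M w = some u := hM.2 u w hMu
  have e1 : s(u, v) ∈ G.edgeFinset := edge_mem huv
  have e2 : s(u, w) ∈ G.edgeFinset := edge_mem (hM.1 u w hMu)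
  have d12 : s(u, v) ≠ s(u, w) := by
    rw [sym2_ne_iff]; exact ⟨fun h => hwv h.2.symm, fun h => huw h.1⟩
  set T : Finset (Sym2 V) := {s(u, v), s(u, w)} with hT
  have hTsub : T ⊆ G.edgeFinset := by
    intro e he
    simp only [hT, Finset.mem_insert, Finset.mem_singleton] at he
    rcases he with rfl | rfl <;> assumption
  have hsplit : ∀ N : V → Option V,
      Phi G r hr N = (∑ e ∈ G.edgeFinset \ T, if me N e then rho G r hr e else 0)
        + ∑ e ∈ T, (if me N e then rho G r hr e else 0) := by
    intro N; rw [phi_as_sum, ← Finset.sum_sdiff hTsub]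
  have hrest : (∑ e ∈ G.edgeFinset \ T, if me (rematch M u v) e then rho G r hr e else 0)
      = ∑ e ∈ G.edgeFinset \ T, if me M e then rho G r hr e else 0 := by
    refine Finset.sum_congr rfl ?_
    intro e he
    rcases Finset.mem_sdiff.mp he with ⟨-, heT⟩
    simp only [hT, Finset.mem_insert, Finset.mem_singleton, not_or] at heT
    induction e using Sym2.ind with
    | _ a b =>
      rw [me_rematch_iff hM hne a b heT.1
        (fun w' hw' => by rw [hMu] at hw'; cases hw'; exact heT.2)
        (fun z' hz' => by rw [hMv] at hz'; cases hz')]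
  have hsumM : ∑ e ∈ T, (if me M e then rho G r hr e else 0) = rho G r hr s(u, w) := by
    rw [hT, Finset.sum_insert (by simp [d12]), Finset.sum_singleton]
    have m1 : ¬ me M s(u, v) := by
      rintro ⟨hc, -⟩; rw [hMu] at hc; cases hc; exact hwv rfl
    have m2 : me M s(u, w) := ⟨hMu, hwu⟩
    simp [m1, m2]
  have hsumM' : ∑ e ∈ T, (if me (rematch M u v) e then rho G r hr e else 0)
      = rho G r hr s(u, v) := by
    rw [hT, Finset.sum_insert (by simp [d12]), Finset.sum_singleton]
    have m1 : me (rematch M u v) s(u, v) := ⟨rematch_fst, rematch_snd hne⟩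
    have m2 : ¬ me (rematch M u v) s(u, w) := by
      rintro ⟨hc, -⟩; rw [rematch_fst] at hc; cases hc; exact hwv rfl
    simp [m1, m2]
  rw [hsplit M, hsplit (rematch M u v), hrest, hsumM, hsumM']
  omega

/-- swivel change, both unmatched -/
lemma Phi_rematch_nn (hM : IsMatching G M) (huv : G.Adj u v)
    (hMu : M u = none) (hMv : M v = none) :
    Phi G r hr (rematch M u v) = Phi G r hr M + rho G r hr s(u, v) := by
  have hne : u ≠ v := huv.ne
  have e1 : s(u, v) ∈ G.edgeFinset := edge_mem huv
  set T : Finset (Sym2 V) := {s(u, v)} with hT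
  have hTsub : T ⊆ G.edgeFinset := by
    intro e he
    simp only [hT, Finset.mem_singleton] at he
    rcases he with rfl; assumption
  have hsplit : ∀ N : V → Option V,
      Phi G r hr N = (∑ e ∈ G.edgeFinset \ T, if me N e then rho G r hr e else 0)
        + ∑ e ∈ T, (if me N e then rho G r hr e else 0) := by
    intro N; rw [phi_as_sum, ← Finset.sum_sdiff hTsub]
  have hrest : (∑ e ∈ G.edgeFinset \ T, if me (rematch M u v) e then rho G r hr e else 0)
      = ∑ e ∈ G.edgeFinset \ T, if me M e then rho G r hr e else 0 := by
    refine Finset.sum_congr rfl ?_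
    intro e he
    rcases Finset.mem_sdiff.mp he with ⟨-, heT⟩
    simp only [hT, Finset.mem_singleton] at heT
    induction e using Sym2.ind with
    | _ a b =>
      rw [me_rematch_iff hM hne a b heT
        (fun w' hw' => by rw [hMu] at hw'; cases hw')
        (fun z' hz' => by rw [hMv] at hz'; cases hz')]
  have hsumM : ∑ e ∈ T, (if me M e then rho G r hr e else 0) = 0 := by
    rw [hT, Finset.sum_singleton]
    have m1 : ¬ me M s(u, v) := by
      rintro ⟨hc, -⟩; rw [hMu] at hc; cases hc
    simp [m1]
  have hsumM' : ∑ e ∈ T, (if me (rematch M u v) e then rho G r hr e else 0)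
      = rho G r hr s(u, v) := by
    rw [hT, Finset.sum_singleton]
    have m1 : me (rematch M u v) s(u, v) := ⟨rematch_fst, rematch_snd hne⟩
    simp [m1]
  rw [hsplit M, hsplit (rematch M u v), hrest, hsumM, hsumM']
  omega

lemma Phi_le_sq : Phi G r hr M ≤ G.edgeFinset.card * G.edgeFinset.card := by
  have h1 : Phi G r hr M ≤ (G.edgeFinset.filter (me M)).card * G.edgeFinset.card := by
    rw [Phi]
    calc ∑ e ∈ G.edgeFinset.filter (me M), rho G r hr e
        ≤ ∑ _e ∈ G.edgeFinset.filter (me M), G.edgeFinset.card :=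
          Finset.sum_le_sum (fun e he => rho_le (Finset.mem_filter.mp he).1)
      _ = (G.edgeFinset.filter (me M)).card * G.edgeFinset.card := by
          rw [Finset.sum_const, smul_eq_mul]
  exact h1.trans (Nat.mul_le_mul_right _ (Finset.card_le_card (Finset.filter_subset _ _)))

end Phi2


def RelaxedBP' (G : SimpleGraph V) (r : V → V → ℝ) (α1 α2 : ℝ)
    (M : V → Option V) (u v : V) : Prop :=
  G.Adj u v ∧ M u ≠ some v ∧
    (((M u = none ∨ M v = none) ∧
        partnerReward r M u < r u v ∧ partnerReward r M v < r u v) ∨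
      (∃ w z, M u = some w ∧ M v = some z ∧
        (1 + α1) * r u w + (α1 + α2) * r v z < (1 + α1) * r u v ∧
        (1 + α1) * r v z + (α1 + α2) * r u w < (1 + α1) * r u v))

/-- biswivel-type relaxed blocking pair -/
def BPair (G : SimpleGraph V) (r : V → V → ℝ) (α1 α2 : ℝ)
    (M : V → Option V) (a b : V) : Prop :=
  G.Adj a b ∧ M a ≠ some b ∧
    (∃ w z, M a = some w ∧ M b = some z ∧
      (1 + α1) * r a w + (α1 + α2) * r b z < (1 + α1) * r a b ∧
      (1 + α1) * r b z + (α1 + α2) * r a w < (1 + α1) * r a b)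

section BP

variable {G : SimpleGraph V} {r : V → V → ℝ} {α1 α2 : ℝ}
variable {M : V → Option V} {u v : V}

lemma BPair.toRBP (h : BPair G r α1 α2 M u v) : RelaxedBP' G r α1 α2 M u v :=
  ⟨h.1, h.2.1, Or.inr h.2.2⟩

lemma rematch_comm (hne : u ≠ v) : rematch M u v = rematch M v u := by
  funext x
  simp only [rematch]
  by_cases hx : x = u
  · simp [hx, hne]
  by_cases hx' : x = v
  · simp [hx, hx', hne.symm]
  · simp [hx, hx', or_comm]

lemma BPair_symm (hM : IsMatching G M) (hr : ∀ a b, r a b = r b a)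
    (h : BPair G r α1 α2 M u v) : BPair G r α1 α2 M v u := by
  obtain ⟨hadj, hne, w, z, hw, hz, i1, i2⟩ := h
  refine ⟨hadj.symm, ?_, z, w, hz, hw, ?_, ?_⟩
  · intro hc
    exact hne ((hM.2 v u hc) ▸ rfl)
  · rw [hr v u]; linarith
  · rw [hr v u]; linarith

lemma RelaxedBP_symm (hM : IsMatching G M) (hr : ∀ a b, r a b = r b a)
    (h : RelaxedBP' G r α1 α2 M u v) : RelaxedBP' G r α1 α2 M v u := by
  obtain ⟨hadj, hne, hrest⟩ := h
  refine ⟨hadj.symm, ?_, ?_⟩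
  · intro hc
    exact hne ((hM.2 v u hc) ▸ rfl)
  · rcases hrest with ⟨h1, h2, h3⟩ | ⟨w, z, hw, hz, i1, i2⟩
    · exact Or.inl ⟨h1.symm, by rw [hr v u]; exact h3, by rw [hr v u]; exact h2⟩
    · exact Or.inr ⟨z, w, hz, hw, by rw [hr v u]; linarith, by rw [hr v u]; linarith⟩

/-- After resolving a maximum-reward relaxed blocking pair `(u,v)`, no
biswivel-type pair involves `u`. -/
lemma no_BPair_at_u (hM : IsMatching G M) (hr : ∀ a b, r a b = r b a)
    (hrn : ∀ a b, 0 ≤ r a b) (hα1 : 0 ≤ α1) (hα2 : 0 ≤ α2)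
    (hRBP : RelaxedBP' G r α1 α2 M u v)
    (hsel : ∀ a b, RelaxedBP' G r α1 α2 M a b → r a b ≤ r u v) :
    ∀ b, ¬ BPair G r α1 α2 (rematch M u v) u b := by
  intro b hB
  obtain ⟨hadj, hne, w', z', haw, hbz, i1, i2⟩ := hB
  have hnuv : M u ≠ some v := hRBP.2.1
  have huv : u ≠ v := hRBP.1.ne
  rw [rematch_fst] at haw
  cases haw
  have hbu : b ≠ u := hadj.ne'
  have hbv : b ≠ v := by
    rintro rfl; exact hne rematch_fst
  -- b is untouched by the rematch
  have hMbu : M b ≠ some u ∧ M b ≠ some v := by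
    by_contra hc
    rw [not_and_or, not_not, not_not] at hc
    rw [rematch_none hbu hbv hc] at hbz
    cases hbz
  have hMb : M b = some z' := by
    rw [rematch_other hbu hbv hMbu.1 hMbu.2] at hbz; exact hbz
  have h1pos : (0:ℝ) < 1 + α1 := by linarith
  have hrub : r u v < r u b := by nlinarith [hrn b z']
  have hrbz : r b z' < r u b := by nlinarith [hrn u v]
  -- (u, b) was a relaxed blocking pair already before the rematch
  have hRBPub : RelaxedBP' G r α1 α2 M u b := by
    rcases hMu : M u with _ | w0
    · refine ⟨hadj, by simp [hMu], Or.inl ⟨Or.inl hMu, ?_, ?_⟩⟩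
      · rw [partnerReward_none hMu]
        have := hrn u v; linarith
      · rw [partnerReward_some hMb]; exact hrbz
    · -- u was matched to w0, with r u w0 ≤ r u v
      have hruw0 : r u w0 < r u v := by
        rcases hRBP.2.2 with ⟨hn, hpru, -⟩ | ⟨w1, z1, hw1, hz1, j1, j2⟩
        · rcases hn with hn | hn
          · rw [hMu] at hn; cases hn
          · rw [partnerReward_some hMu] at hpru; exact hpru
        · rw [hMu] at hw1
          cases hw1
          nlinarith [hrn v z1]
      have hbw0 : b ≠ w0 := by
        rintro rfl
        exact hMbu.1 (hM.2 u b hMu)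
      refine ⟨hadj, ?_, Or.inr ⟨w0, z', hMu, hMb, ?_, ?_⟩⟩
      · rw [hMu]
        intro hc
        exact hbw0 (Option.some_injective _ hc).symm
      · nlinarith
      · nlinarith
  exact absurd (hsel u b hRBPub) (by linarith)

/-- Lemma Y: resolving a maximum-reward relaxed blocking pair never creates
new biswivel-type pairs. -/
lemma BPair_monotone (hM : IsMatching G M) (hr : ∀ a b, r a b = r b a)
    (hrn : ∀ a b, 0 ≤ r a b) (hα1 : 0 ≤ α1) (hα2 : 0 ≤ α2)
    (hRBP : RelaxedBP' G r α1 α2 M u v)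
    (hsel : ∀ a b, RelaxedBP' G r α1 α2 M a b → r a b ≤ r u v) :
    ∀ a b, BPair G r α1 α2 (rematch M u v) a b → BPair G r α1 α2 M a b := by
  have huv : u ≠ v := hRBP.1.ne
  have hM' : IsMatching G (rematch M u v) := hM.rematch hRBP.1
  have hkeyv : ∀ b, ¬ BPair G r α1 α2 (rematch M u v) v b := by
    have hRBP' := RelaxedBP_symm hM hr hRBP
    have hsel' : ∀ a b, RelaxedBP' G r α1 α2 M a b → r a b ≤ r v u := by
      intro a b hab; rw [hr v u]; exact hsel a b hab
    intro b
    rw [rematch_comm huv]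
    exact no_BPair_at_u hM hr hrn hα1 hα2 hRBP' hsel' b
  intro a b hB
  have hau : a ≠ u := by
    rintro rfl; exact no_BPair_at_u hM hr hrn hα1 hα2 hRBP hsel b hB
  have hav : a ≠ v := by
    rintro rfl; exact hkeyv b hB
  have hbu : b ≠ u := by
    rintro rfl
    exact no_BPair_at_u hM hr hrn hα1 hα2 hRBP hsel a (BPair_symm hM' hr hB)
  have hbv : b ≠ v := by
    rintro rfl
    exact hkeyv a (BPair_symm hM' hr hB)
  obtain ⟨hadj, hne, w', z', haw, hbz, i1, i2⟩ := hB
  have hMau : M a ≠ some u ∧ M a ≠ some v := by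
    by_contra hc
    rw [not_and_or, not_not, not_not] at hc
    rw [rematch_none hau hav hc] at haw; cases haw
  have hMbu : M b ≠ some u ∧ M b ≠ some v := by
    by_contra hc
    rw [not_and_or, not_not, not_not] at hc
    rw [rematch_none hbu hbv hc] at hbz; cases hbz
  rw [rematch_other hau hav hMau.1 hMau.2] at haw
  rw [rematch_other hbu hbv hMbu.1 hMbu.2] at hbz
  refine ⟨hadj, ?_, w', z', haw, hbz, i1, i2⟩
  intro hc
  exact hne (by rw [rematch_other hau hav hMau.1 hMau.2]; exact hc)

end BP


section Count

open scoped Classical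

variable {G : SimpleGraph V} {r : V → V → ℝ} {α1 α2 : ℝ}
variable {M : V → Option V} {u v : V}

noncomputable def BS (G : SimpleGraph V) (r : V → V → ℝ) (α1 α2 : ℝ)
    (M : V → Option V) : Finset (V × V) :=
  (Finset.univ ×ˢ Finset.univ).filter (fun p => BPair G r α1 α2 M p.1 p.2)

lemma BS_le : (BS G r α1 α2 M).card ≤ 2 * G.edgeFinset.card := by
  have hsub : BS G r α1 α2 M ⊆ Finset.univ.filter (fun (x, y) => G.Adj x y) := by
    intro p hp
    rcases Finset.mem_filter.mp hp with ⟨-, hB⟩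
    exact Finset.mem_filter.mpr ⟨Finset.mem_univ p, hB.1⟩
  calc (BS G r α1 α2 M).card ≤ _ := Finset.card_le_card hsub
    _ = 2 * G.edgeFinset.card := by
        rw [SimpleGraph.two_mul_card_edgeFinset]

end Count


section Step

open scoped Classical

variable {G : SimpleGraph V} {r : V → V → ℝ} {α1 α2 : ℝ}
variable {M : V → Option V} {u v : V}

noncomputable def Theta (G : SimpleGraph V) (r : V → V → ℝ)
    (hr : ∀ a b, r a b = r b a) (α1 α2 : ℝ) (M : V → Option V) : ℤ :=
  2 * (Phi G r hr M : ℤ) +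
    (G.edgeFinset.card : ℤ) * (2 * (G.edgeFinset.card : ℤ) - ((BS G r α1 α2 M).card : ℤ))

lemma Theta_nonneg {hr : ∀ a b, r a b = r b a} :
    0 ≤ Theta G r hr α1 α2 M := by
  have h1 := BS_le (G := G) (r := r) (α1 := α1) (α2 := α2) (M := M)
  have h2 : (0:ℤ) ≤ 2 * G.edgeFinset.card - (BS G r α1 α2 M).card := by
    have : ((BS G r α1 α2 M).card : ℤ) ≤ 2 * G.edgeFinset.card := by exact_mod_cast h1
    linarith
  have h3 : (0:ℤ) ≤ (G.edgeFinset.card : ℤ) := Int.natCast_nonneg _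
  have := mul_nonneg h3 h2
  have h4 : (0:ℤ) ≤ (Phi G r hr M : ℤ) := Int.natCast_nonneg _
  unfold Theta; push_cast; linarith

lemma Theta_le {hr : ∀ a b, r a b = r b a} :
    Theta G r hr α1 α2 M ≤ 4 * (G.edgeFinset.card : ℤ) ^ 2 := by
  have h1 : (Phi G r hr M : ℤ) ≤ (G.edgeFinset.card : ℤ) * G.edgeFinset.card := by
    exact_mod_cast Phi_le_sq (G := G) (r := r) (hr := hr) (M := M)
  have h2 : (0:ℤ) ≤ ((BS G r α1 α2 M).card : ℤ) := Int.natCast_nonneg _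
  have h3 : (0:ℤ) ≤ (G.edgeFinset.card : ℤ) := Int.natCast_nonneg _
  have h4 : (G.edgeFinset.card : ℤ) * (2 * G.edgeFinset.card - (BS G r α1 α2 M).card)
      ≤ (G.edgeFinset.card : ℤ) * (2 * G.edgeFinset.card) := by
    apply mul_le_mul_of_nonneg_left _ h3
    linarith
  unfold Theta; push_cast; nlinarith

lemma Theta_step (hM : IsMatching G M) (hr : ∀ a b, r a b = r b a)
    (hrn : ∀ a b, 0 ≤ r a b) (hα1 : 0 ≤ α1) (hα2 : 0 ≤ α2)
    (hRBP : RelaxedBP' G r α1 α2 M u v)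
    (hsel : ∀ a b, RelaxedBP' G r α1 α2 M a b → r a b ≤ r u v) :
    Theta G r hr α1 α2 M + 2 ≤ Theta G r hr α1 α2 (rematch M u v) := by
  set m := G.edgeFinset.card with hm
  have hmZ : (0:ℤ) ≤ (m:ℤ) := Int.natCast_nonneg _
  have hadj : G.Adj u v := hRBP.1
  have hnuv : M u ≠ some v := hRBP.2.1
  have huv : u ≠ v := hadj.ne
  have h1pos : (0:ℝ) < 1 + α1 := by linarith
  have he1 : s(u, v) ∈ G.edgeFinset := edge_mem hadj
  have hCle : (BS G r α1 α2 (rematch M u v)).card ≤ (BS G r α1 α2 M).card := by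
    apply Finset.card_le_card
    intro p hp
    rcases Finset.mem_filter.mp hp with ⟨hp1, hp2⟩
    exact Finset.mem_filter.mpr
      ⟨hp1, BPair_monotone hM hr hrn hα1 hα2 hRBP hsel p.1 p.2 hp2⟩
  rcases hRBP.2.2 with ⟨hn, hpru, hprv⟩ | ⟨w, z, hMw, hMz, i1, i2⟩
  · -- swivel : Phi increases by at least 1
    have hPhi : Phi G r hr M + 1 ≤ Phi G r hr (rematch M u v) := by
      rcases hn with hn | hn
      · rcases hMv : M v with _ | z
        · rw [Phi_rematch_nn hM hadj hn hMv]
          have := one_le_rho (G := G) (r := r) (hr := hr) s(u, v); omega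
        · have heq := Phi_rematch_nz (hr := hr) hM hadj hn hMv
          have hlt : rho G r hr s(v, z) < rho G r hr s(u, v) := by
            apply rho_lt_of_r_lt (edge_mem (hM.1 v z hMv))
            rw [partnerReward_some hMv] at hprv
            simpa using hprv
          omega
      · rcases hMu : M u with _ | w
        · rcases hMv : M v with _ | z
          · rw [Phi_rematch_nn hM hadj hMu hMv]
            have := one_le_rho (G := G) (r := r) (hr := hr) s(u, v); omega
          · have heq := Phi_rematch_nz (hr := hr) hM hadj hMu hMv
            have hlt : rho G r hr s(v, z) < rho G r hr s(u, v) := by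
              apply rho_lt_of_r_lt (edge_mem (hM.1 v z hMv))
              rw [partnerReward_some hMv] at hprv
              simpa using hprv
            omega
        · have heq := Phi_rematch_wn (hr := hr) hM hadj hMu hn
          have hlt : rho G r hr s(u, w) < rho G r hr s(u, v) := by
            apply rho_lt_of_r_lt (edge_mem (hM.1 u w hMu))
            rw [partnerReward_some hMu] at hpru
            simpa using hpru
          omega
    have hC : ((BS G r α1 α2 (rematch M u v)).card : ℤ) ≤ (BS G r α1 α2 M).card := by
      exact_mod_cast hCle
    have hmul : (m:ℤ) * (2 * m - (BS G r α1 α2 M).card)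
        ≤ (m:ℤ) * (2 * m - (BS G r α1 α2 (rematch M u v)).card) := by
      apply mul_le_mul_of_nonneg_left _ hmZ
      linarith
    have hPhiZ : (Phi G r hr M : ℤ) + 1 ≤ (Phi G r hr (rematch M u v) : ℤ) := by
      exact_mod_cast hPhi
    unfold Theta; rw [← hm]; push_cast; linarith
  · -- biswivel
    have hzu : z ≠ u := by
      rintro rfl; exact hnuv (hM.2 v _ hMz)
    have hwv : w ≠ v := by
      rintro rfl; exact hnuv hMw
    have hruw : r u w < r u v := by nlinarith [hrn v z]
    have hrvz : r v z < r u v := by nlinarith [hrn u w]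
    have he2 : s(u, w) ∈ G.edgeFinset := edge_mem (hM.1 u w hMw)
    have he3 : s(v, z) ∈ G.edgeFinset := edge_mem (hM.1 v z hMz)
    have hr2 : rho G r hr s(u, w) < rho G r hr s(u, v) :=
      rho_lt_of_r_lt he2 (by simpa using hruw)
    have hr3 : rho G r hr s(v, z) < rho G r hr s(u, v) :=
      rho_lt_of_r_lt he3 (by simpa using hrvz)
    have hne23 : s(u, w) ≠ s(v, z) := by
      rw [sym2_ne_iff]
      exact ⟨fun h => huv h.1, fun h => hzu h.1.symm⟩
    have hrne : rho G r hr s(u, w) ≠ rho G r hr s(v, z) := rho_ne he2 he3 hne23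
    have hr1 : rho G r hr s(u, v) ≤ m := rho_le he1
    have heq := Phi_rematch_wz (hr := hr) hM hadj hnuv hMw hMz
    have hPhiZ : (Phi G r hr M : ℤ) + 3 - m ≤ (Phi G r hr (rematch M u v) : ℤ) := by
      have h3m : 3 ≤ m := by
        -- the three distinct edges
        have hne12 : s(u, v) ≠ s(u, w) := by
          rw [sym2_ne_iff]
          exact ⟨fun h => hwv h.2.symm, fun h => (hM.ne_of_partner hMw) h.1⟩
        have hne13 : s(u, v) ≠ s(v, z) := by
          rw [sym2_ne_iff]
          exact ⟨fun h => huv h.1, fun h => hzu h.1.symm⟩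
        have hsub : {s(u, v), s(u, w), s(v, z)} ⊆ G.edgeFinset := by
          intro e he
          simp only [Finset.mem_insert, Finset.mem_singleton] at he
          rcases he with rfl | rfl | rfl <;> assumption
        have := Finset.card_le_card hsub
        rwa [Finset.card_insert_of_notMem (by simp [hne12, hne13]),
          Finset.card_insert_of_notMem (by simp [hne23]), Finset.card_singleton] at this
      omega
    -- biswivel removes (u,v) and (v,u) from the biswivel-pair set
    have hBuv : (u, v) ∈ BS G r α1 α2 M := by
      refine Finset.mem_filter.mpr ⟨by simp, ?_⟩
      exact ⟨hadj, hnuv, w, z, hMw, hMz, i1, i2⟩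
    have hBvu : (v, u) ∈ BS G r α1 α2 M := by
      refine Finset.mem_filter.mpr ⟨by simp, ?_⟩
      exact BPair_symm hM hr ⟨hadj, hnuv, w, z, hMw, hMz, i1, i2⟩
    have hTsub : {(u, v), (v, u)} ⊆ BS G r α1 α2 M := by
      intro p hp
      simp only [Finset.mem_insert, Finset.mem_singleton] at hp
      rcases hp with rfl | rfl <;> assumption
    have hsub2 : BS G r α1 α2 (rematch M u v) ⊆ BS G r α1 α2 M \ {(u, v), (v, u)} := by
      intro p hp
      rcases Finset.mem_filter.mp hp with ⟨hp1, hp2⟩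
      refine Finset.mem_sdiff.mpr ⟨Finset.mem_filter.mpr
        ⟨hp1, BPair_monotone hM hr hrn hα1 hα2 hRBP hsel p.1 p.2 hp2⟩, ?_⟩
      simp only [Finset.mem_insert, Finset.mem_singleton]
      rintro (rfl | rfl)
      · exact hp2.2.1 rematch_fst
      · exact hp2.2.1 (rematch_snd huv)
    have hCdrop : (BS G r α1 α2 (rematch M u v)).card + 2 ≤ (BS G r α1 α2 M).card := by
      have h1 := Finset.card_le_card hsub2
      rw [Finset.card_sdiff_of_subset hTsub] at h1
      have h2 : ({(u, v), (v, u)} : Finset (V × V)).card = 2 := by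
        rw [Finset.card_insert_of_notMem (by simp [huv, Prod.ext_iff]),
          Finset.card_singleton]
      rw [h2] at h1
      have := Finset.card_le_card hTsub
      rw [h2] at this
      omega
    have hCZ : ((BS G r α1 α2 (rematch M u v)).card : ℤ) + 2 ≤ (BS G r α1 α2 M).card := by
      exact_mod_cast hCdrop
    have hmul : (m:ℤ) * (2 * m - (BS G r α1 α2 M).card) + 2 * m
        ≤ (m:ℤ) * (2 * m - (BS G r α1 α2 (rematch M u v)).card) := by
      have : (m:ℤ) * (2 * m - (BS G r α1 α2 M).card) + (m:ℤ) * 2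
          ≤ (m:ℤ) * (2 * m - (BS G r α1 α2 (rematch M u v)).card) := by
        rw [← mul_add]
        apply mul_le_mul_of_nonneg_left _ hmZ
        linarith
      linarith
    have h3m' : (3:ℤ) ≤ m := by
      have : (Phi G r hr M : ℤ) ≥ 0 := Int.natCast_nonneg _
      -- from hPhiZ we don't get it; reuse: m ≥ 3 was shown inside; redo cheaply
      have hne12 : s(u, v) ≠ s(u, w) := by
        rw [sym2_ne_iff]
        exact ⟨fun h => hwv h.2.symm, fun h => (hM.ne_of_partner hMw) h.1⟩
      have hne13 : s(u, v) ≠ s(v, z) := by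
        rw [sym2_ne_iff]
        exact ⟨fun h => huv h.1, fun h => hzu h.1.symm⟩
      have hsub : {s(u, v), s(u, w), s(v, z)} ⊆ G.edgeFinset := by
        intro e he
        simp only [Finset.mem_insert, Finset.mem_singleton] at he
        rcases he with rfl | rfl | rfl <;> assumption
      have := Finset.card_le_card hsub
      rw [Finset.card_insert_of_notMem (by simp [hne12, hne13]),
        Finset.card_insert_of_notMem (by simp [hne23]), Finset.card_singleton] at this
      exact_mod_cast this
    unfold Theta; rw [← hm]; push_cast; linarith

end Step


section Stability

variable {G : SimpleGraph V} {r : V → V → ℝ} {α : ℕ → ℝ}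
variable {M : V → Option V} {u v w z x : V}

lemma sum_diff_subset {s T : Finset V} (F F' : V → ℝ) (hT : T ⊆ s)
    (h : ∀ x ∈ s, x ∉ T → F' x = F x) :
    (∑ x ∈ s, F' x) - ∑ x ∈ s, F x = ∑ x ∈ T, (F' x - F x) := by
  rw [← Finset.sum_sub_distrib]
  exact (Finset.sum_subset hT (fun x hx hxT => by rw [h x hx hxT]; ring)).symm

lemma partnerReward_rematch_other (hM : IsMatching G M) (hxu : x ≠ u) (hxv : x ≠ v)
    (hxw : ∀ w, M u = some w → x ≠ w) (hxz : ∀ z, M v = some z → x ≠ z) :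
    partnerReward r (rematch M u v) x = partnerReward r M x := by
  have h1 : M x ≠ some u := fun hc => hxw x (hM.2 x u hc) rfl
  have h2 : M x ≠ some v := fun hc => hxz x (hM.2 x v hc) rfl
  have h := rematch_other (M := M) hxu hxv h1 h2
  simp [partnerReward, h]

lemma dist_one_of_adj (h : G.Adj u v) : G.dist u v = 1 :=
  SimpleGraph.dist_eq_one_iff_adj.mpr h

lemma alpha_two_step (hα : FriendshipVec α) (huv : G.Adj u v) (hvz : G.Adj v z)
    (huz : u ≠ z) : α 2 ≤ α (G.dist u z) ∧ α (G.dist u z) ≤ α 1 := by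
  have hle2 : G.dist u z ≤ 2 := by
    simpa using SimpleGraph.dist_le
      (SimpleGraph.Walk.cons huv (SimpleGraph.Walk.cons hvz SimpleGraph.Walk.nil))
  have hge1 : 1 ≤ G.dist u z := by
    have hne0 : G.dist u z ≠ 0 :=
      SimpleGraph.dist_ne_zero_iff_ne_and_reachable.mpr
        ⟨huz, ⟨SimpleGraph.Walk.cons huv (SimpleGraph.Walk.cons hvz SimpleGraph.Walk.nil)⟩⟩
    omega
  exact ⟨hα.2.2.2 (G.dist u z) 2 hge1 hle2, hα.2.2.2 1 (G.dist u z) le_rfl hge1⟩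

/-- Utility computation for a blocking move when both deviators are matched. -/
lemma blocking_ineq (hM : IsMatching G M) (hr : ∀ a b, r a b = r b a)
    (hrn : ∀ a b, 0 ≤ r a b) (hα : FriendshipVec α)
    (hadj : G.Adj u v) (hnuv : M u ≠ some v)
    (hMu : M u = some w) (hMv : M v = some z)
    (hu : util G r α M u < util G r α (rematch M u v) u) :
    (1 + α 1) * r u w + (α 1 + α 2) * r v z < (1 + α 1) * r u v := by
  have huv : u ≠ v := hadj.ne
  have huw : u ≠ w := hM.ne_of_partner hMu
  have hvz : v ≠ z := hM.ne_of_partner hMv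
  have hwv : w ≠ v := by rintro rfl; exact hnuv hMu
  have hzu : z ≠ u := by rintro rfl; exact hnuv (hM.2 v _ hMv)
  have hMw : M w = some u := hM.2 u w hMu
  have hMz : M z = some v := hM.2 v z hMv
  have hwz : w ≠ z := by
    rintro rfl; rw [hMw] at hMz; cases hMz; exact huv rfl
  have hzv : z ≠ v := fun h => hvz h.symm
  have hwu : w ≠ u := fun h => huw h.symm
  have hvw : v ≠ w := fun h => hwv h.symm
  have hvz' : v ≠ z := hvz
  have hT : ({v, w, z} : Finset V) ⊆ Finset.univ.filter (fun x => x ≠ u) := by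
    intro x hx
    simp only [Finset.mem_insert, Finset.mem_singleton] at hx
    rcases hx with rfl | rfl | rfl <;>
      simp [huv.symm, hwu, hzu]
  have hout : ∀ x ∈ Finset.univ.filter (fun x => x ≠ u), x ∉ ({v, w, z} : Finset V) →
      α (G.dist u x) * partnerReward r (rematch M u v) x
        = α (G.dist u x) * partnerReward r M x := by
    intro x hx hxT
    simp only [Finset.mem_filter, Finset.mem_univ, true_and] at hx
    simp only [Finset.mem_insert, Finset.mem_singleton, not_or] at hxT
    rw [partnerReward_rematch_other hM hx hxT.1
      (fun w' hw' => by rw [hMu] at hw'; cases hw'; exact hxT.2.1)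
      (fun z' hz' => by rw [hMv] at hz'; cases hz'; exact hxT.2.2)]
  have hsum := sum_diff_subset
    (fun x => α (G.dist u x) * partnerReward r M x)
    (fun x => α (G.dist u x) * partnerReward r (rematch M u v) x) hT hout
  have hTsum : ∑ x ∈ ({v, w, z} : Finset V),
      (α (G.dist u x) * partnerReward r (rematch M u v) x
        - α (G.dist u x) * partnerReward r M x)
      = α 1 * (r v u - r v z) + α 1 * (0 - r w u) + α (G.dist u z) * (0 - r z v) := by
    rw [Finset.sum_insert (by simp [hvw, hvz']),
      Finset.sum_insert (by simp [hwz]), Finset.sum_singleton]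
    rw [partnerReward_some (rematch_snd huv) r, partnerReward_some hMv r,
      partnerReward_none (rematch_none hwu hwv (Or.inl hMw)) r, partnerReward_some hMw r,
      partnerReward_none (rematch_none hzu hzv (Or.inr hMz)) r, partnerReward_some hMz r,
      dist_one_of_adj hadj, dist_one_of_adj (hM.1 u w hMu)]
    ring
  have hdiff : util G r α (rematch M u v) u - util G r α M u
      = (r u v - r u w) + (α 1 * (r v u - r v z) + α 1 * (0 - r w u)
          + α (G.dist u z) * (0 - r z v)) := by
    rw [util, util, partnerReward_some rematch_fst r, partnerReward_some hMu r, ← hTsum,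
      ← hsum]
    ring
  have hα2z := alpha_two_step hα hadj (hM.1 v z hMv) (fun h => hzu h.symm)
  have hmul : α 2 * r z v ≤ α (G.dist u z) * r z v :=
    mul_le_mul_of_nonneg_right hα2z.1 (hrn z v)
  have h1 : r v u = r u v := hr v u
  have h2 : r w u = r u w := hr w u
  have h3 : r z v = r v z := hr z v
  have h0 : 0 < util G r α (rematch M u v) u - util G r α M u := by linarith
  rw [hdiff, h1, h2, h3] at h0
  rw [h3] at hmul
  linarith [hmul]
end Stability


section Stability2

variable {G : SimpleGraph V} {r : V → V → ℝ} {α : ℕ → ℝ}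
variable {M : V → Option V} {u v w z x : V}

/-- Utility computation for a blocking move: u unmatched, v matched to z. -/
lemma blocking_swivel_nz (hM : IsMatching G M) (hr : ∀ a b, r a b = r b a)
    (hrn : ∀ a b, 0 ≤ r a b) (hα : FriendshipVec α)
    (hadj : G.Adj u v) (hMu : M u = none) (hMv : M v = some z)
    (hv : util G r α M v < util G r α (rematch M u v) v) :
    r v z < r u v := by
  have huv : u ≠ v := hadj.ne
  have hvz : v ≠ z := hM.ne_of_partner hMv
  have hzu : z ≠ u := by
    rintro rfl; rw [hM.2 v _ hMv] at hMu; cases hMu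
  have hzv : z ≠ v := fun h => hvz h.symm
  have hMz : M z = some v := hM.2 v z hMv
  have huz : u ≠ z := fun h => hzu h.symm
  have hT : ({u, z} : Finset V) ⊆ Finset.univ.filter (fun x => x ≠ v) := by
    intro x hx
    simp only [Finset.mem_insert, Finset.mem_singleton] at hx
    rcases hx with rfl | rfl <;> simp [huv, hzv]
  have hout : ∀ x ∈ Finset.univ.filter (fun x => x ≠ v), x ∉ ({u, z} : Finset V) →
      α (G.dist v x) * partnerReward r (rematch M u v) x
        = α (G.dist v x) * partnerReward r M x := by
    intro x hx hxT
    simp only [Finset.mem_filter, Finset.mem_univ, true_and] at hx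
    simp only [Finset.mem_insert, Finset.mem_singleton, not_or] at hxT
    rw [partnerReward_rematch_other hM hxT.1 hx
      (fun w' hw' => by rw [hMu] at hw'; cases hw')
      (fun z' hz' => by rw [hMv] at hz'; cases hz'; exact hxT.2)]
  have hsum := sum_diff_subset
    (fun x => α (G.dist v x) * partnerReward r M x)
    (fun x => α (G.dist v x) * partnerReward r (rematch M u v) x) hT hout
  have hTsum : ∑ x ∈ ({u, z} : Finset V),
      (α (G.dist v x) * partnerReward r (rematch M u v) x
        - α (G.dist v x) * partnerReward r M x)
      = α 1 * (r u v - 0) + α 1 * (0 - r z v) := by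
    rw [Finset.sum_insert (by simp [huz]), Finset.sum_singleton]
    rw [partnerReward_some rematch_fst r, partnerReward_none hMu r,
      partnerReward_none (rematch_none hzu hzv (Or.inr hMz)) r, partnerReward_some hMz r,
      dist_one_of_adj hadj.symm, dist_one_of_adj (hM.1 v z hMv)]
    ring
  have hdiff : util G r α (rematch M u v) v - util G r α M v
      = (r v u - r v z) + (α 1 * (r u v - 0) + α 1 * (0 - r z v)) := by
    rw [util, util, partnerReward_some (rematch_snd huv) r, partnerReward_some hMv r,
      ← hTsum, ← hsum]
    ring
  have h0 : 0 < util G r α (rematch M u v) v - util G r α M v := by linarith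
  rw [hdiff, hr v u, hr z v] at h0
  have hα1 : 0 ≤ α 1 := hα.2.2.1 1
  nlinarith

/-- Utility computation for a blocking move: both unmatched. -/
lemma blocking_swivel_nn (hM : IsMatching G M) (hr : ∀ a b, r a b = r b a)
    (hrn : ∀ a b, 0 ≤ r a b) (hα : FriendshipVec α)
    (hadj : G.Adj u v) (hMu : M u = none) (hMv : M v = none)
    (hu : util G r α M u < util G r α (rematch M u v) u) :
    0 < r u v := by
  have huv : u ≠ v := hadj.ne
  have hT : ({v} : Finset V) ⊆ Finset.univ.filter (fun x => x ≠ u) := by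
    intro x hx
    simp only [Finset.mem_singleton] at hx
    rcases hx with rfl; simp [huv.symm]
  have hout : ∀ x ∈ Finset.univ.filter (fun x => x ≠ u), x ∉ ({v} : Finset V) →
      α (G.dist u x) * partnerReward r (rematch M u v) x
        = α (G.dist u x) * partnerReward r M x := by
    intro x hx hxT
    simp only [Finset.mem_filter, Finset.mem_univ, true_and] at hx
    simp only [Finset.mem_singleton] at hxT
    rw [partnerReward_rematch_other hM hx hxT
      (fun w' hw' => by rw [hMu] at hw'; cases hw')
      (fun z' hz' => by rw [hMv] at hz'; cases hz')]
  have hsum := sum_diff_subset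
    (fun x => α (G.dist u x) * partnerReward r M x)
    (fun x => α (G.dist u x) * partnerReward r (rematch M u v) x) hT hout
  have hTsum : ∑ x ∈ ({v} : Finset V),
      (α (G.dist u x) * partnerReward r (rematch M u v) x
        - α (G.dist u x) * partnerReward r M x)
      = α 1 * (r v u - 0) := by
    rw [Finset.sum_singleton]
    rw [partnerReward_some (rematch_snd huv) r, partnerReward_none hMv r,
      dist_one_of_adj hadj]
    ring
  have hdiff : util G r α (rematch M u v) u - util G r α M u
      = (r u v - 0) + α 1 * (r v u - 0) := by
    rw [util, util, partnerReward_some rematch_fst r, partnerReward_none hMu r,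
      ← hTsum, ← hsum]
    ring
  have h0 : 0 < util G r α (rematch M u v) u - util G r α M u := by linarith
  rw [hdiff, hr v u] at h0
  have hα1 : 0 ≤ α 1 := hα.2.2.1 1
  nlinarith

/-- Every blocking pair is a relaxed blocking pair. -/
lemma blocking_to_RBP (hM : IsMatching G M) (hr : ∀ a b, r a b = r b a)
    (hrn : ∀ a b, 0 ≤ r a b) (hα : FriendshipVec α)
    (hb : IsBlockingPair G r α M u v) :
    RelaxedBP' G r (α 1) (α 2) M u v := by
  obtain ⟨hadj, hne, hu, hv⟩ := hb
  have huv : u ≠ v := hadj.ne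
  have hnvu : M v ≠ some u := by
    intro hc; exact hne (hM.2 v u hc)
  refine ⟨hadj, hne, ?_⟩
  rcases hMu : M u with _ | w <;> rcases hMv : M v with _ | z
  · -- both unmatched
    have := blocking_swivel_nn hM hr hrn hα hadj hMu hMv hu
    exact Or.inl ⟨Or.inl rfl, by rw [partnerReward_none hMu]; exact this,
      by rw [partnerReward_none hMv]; exact this⟩
  · -- u unmatched, v matched
    have h1 := blocking_swivel_nz hM hr hrn hα hadj hMu hMv hv
    refine Or.inl ⟨Or.inl rfl, ?_, ?_⟩
    · rw [partnerReward_none hMu]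
      have := hrn v z; linarith
    · rw [partnerReward_some hMv]; exact h1
  · -- u matched, v unmatched
    have h1 : r u w < r v u := by
      apply blocking_swivel_nz (u := v) (v := u) (z := w) hM hr hrn hα hadj.symm hMv hMu
      rw [← rematch_comm huv]
      exact hu
    rw [hr v u] at h1
    refine Or.inl ⟨Or.inr rfl, ?_, ?_⟩
    · rw [partnerReward_some hMu]; exact h1
    · rw [partnerReward_none hMv]
      have := hrn u w; linarith
  · -- both matched
    have i1 := blocking_ineq hM hr hrn hα hadj hne hMu hMv hu
    have i2 : (1 + α 1) * r v z + (α 1 + α 2) * r u w < (1 + α 1) * r v u := by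
      apply blocking_ineq (u := v) (v := u) (w := z) (z := w) hM hr hrn hα hadj.symm
        hnvu hMv hMu
      rw [← rematch_comm huv]
      exact hv
    rw [hr v u] at i2
    exact Or.inr ⟨w, z, rfl, rfl, i1, i2⟩

lemma RBP_eq {α1 α2 : ℝ} :
    RelaxedBP G r α1 α2 M u v ↔ RelaxedBP' G r α1 α2 M u v := Iff.rfl

end Stability2


/-- the Best-Relaxed-Blocking-Pair algorithm, run from a
maximum-weight matching and always resolving a relaxed blocking pair of maximum
edge reward, reaches within 2m² iterations a matching with no relaxed blocking
pair, which is in particular a stable matching. -/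
theorem brbp_terminates_in_stable_matching
    (G : SimpleGraph V) [DecidableRel G.Adj] (r : V → V → ℝ) (α : ℕ → ℝ)
    (hr_symm : ∀ u v, r u v = r v u) (hr_nonneg : ∀ u v, 0 ≤ r u v)
    (hα : FriendshipVec α)
    (Mstar : V → Option V) (hMstar : IsMatching G Mstar)
    (hmax : ∀ M : V → Option V, IsMatching G M → matchWeight r M ≤ matchWeight r Mstar)
    (f : ℕ → V → Option V) (hf0 : f 0 = Mstar)
    (hstep : ∀ i, (∃ u v, RelaxedBP G r (α 1) (α 2) (f i) u v) →
      ∃ u v, RelaxedBP G r (α 1) (α 2) (f i) u v ∧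
        (∀ a b, RelaxedBP G r (α 1) (α 2) (f i) a b → r a b ≤ r u v) ∧
        f (i + 1) = rematch (f i) u v)
    (hfix : ∀ i, ¬ (∃ u v, RelaxedBP G r (α 1) (α 2) (f i) u v) →
      f (i + 1) = f i) :
    ∃ n ≤ 2 * G.edgeFinset.card ^ 2,
      (∀ u v, ¬ RelaxedBP G r (α 1) (α 2) (f n) u v) ∧
      StableMatching G r α (f n) := by
  have hα1 : (0:ℝ) ≤ α 1 := hα.2.2.1 1
  have hα2 : (0:ℝ) ≤ α 2 := hα.2.2.1 2
  have hMatch : ∀ n, IsMatching G (f n) := by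
    intro n
    induction n with
    | zero => rw [hf0]; exact hMstar
    | succ n ih =>
      by_cases hex : ∃ u v, RelaxedBP G r (α 1) (α 2) (f n) u v
      · obtain ⟨u, v, hRBP, hsel, heq⟩ := hstep n hex
        rw [heq]; exact ih.rematch hRBP.1
      · rw [hfix n hex]; exact ih
  have hTheta : ∀ n : ℕ, (∀ k, k < n → ∃ u v, RelaxedBP G r (α 1) (α 2) (f k) u v) →
      Theta G r hr_symm (α 1) (α 2) (f 0) + 2 * n
        ≤ Theta G r hr_symm (α 1) (α 2) (f n) := by
    intro n
    induction n with
    | zero => intro _; simp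
    | succ n ih =>
      intro h
      obtain ⟨u, v, hRBP, hsel, heq⟩ := hstep n (h n (Nat.lt_succ_self n))
      have h1 := ih (fun k hk => h k (hk.trans (Nat.lt_succ_self n)))
      have h2 := Theta_step (hMatch n) hr_symm hr_nonneg hα1 hα2 (RBP_eq.mp hRBP)
        (fun a b hab => hsel a b (RBP_eq.mpr hab))
      rw [heq]
      push_cast
      push_cast at h1
      linarith
  by_cases hex : ∃ n, n ≤ 2 * G.edgeFinset.card ^ 2 ∧
      ∀ u v, ¬ RelaxedBP G r (α 1) (α 2) (f n) u v
  · obtain ⟨n, hn, hno⟩ := hex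
    exact ⟨n, hn, hno, hMatch n, fun u v hb =>
      hno u v (RBP_eq.mpr (blocking_to_RBP (hMatch n) hr_symm hr_nonneg hα hb))⟩
  · exfalso
    push_neg at hex
    set N := 2 * G.edgeFinset.card ^ 2 with hN
    have hall : ∀ k, k < N + 1 → ∃ u v, RelaxedBP G r (α 1) (α 2) (f k) u v := by
      intro k hk
      exact hex k (by omega)
    have h1 := hTheta (N + 1) hall
    have h2 := Theta_le (G := G) (r := r) (hr := hr_symm) (α1 := α 1) (α2 := α 2)
      (M := f (N + 1))
    have h0 := Theta_nonneg (G := G) (r := r) (hr := hr_symm) (α1 := α 1) (α2 := α 2)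
      (M := f 0)
    have hcard : ∀ (i : Fintype G.edgeSet),
        (@SimpleGraph.edgeFinset V G i).card = G.edgeFinset.card := by
      intro i; congr!
    have h2' : Theta G r hr_symm (α 1) (α 2) (f (N + 1))
        ≤ 4 * ((G.edgeFinset.card : ℤ)) ^ 2 := by
      convert h2 using 5
      congr!
    clear h2
    have hNZ : (N:ℤ) = 2 * ((G.edgeFinset.card : ℤ)) ^ 2 := by
      rw [hN]; push_cast; ring
    push_cast at h1 h2' h0
    linarith
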